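/- arXiv:2601.11555 — 7 statements merged into one kernel-verified Lean document; each statement's English description precedes it below -/
import Mathlib

section
/- Suppose at least one of the sets S_1, …, S_k, C_1, …, C_m is bounded. Then the generalized (k,m)-Heron problem has an optimal solution: there exists a point Z* = (x_1*, …, x_k*, y_1*, …, y_m*) in the feasible set A such that F(Z*) ≤ F(Z) for every Z ∈ A. -/
/-!
The cost `F = Heron.cost` is continuous, so it suffices that its sublevel sets in the closed
feasible set are bounded. If `S i₀` is bounded, then every `y j` lies within `F` of the bounded
point `x i₀`, and every `x i` within `F` of some `y j`; hence `‖(x, y)‖ ≤ r + 2 F(x, y)`. The case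
of a bounded `C j₀` reduces to this one, since `F` is symmetric in the roles of the two families.
-/

open Filter Set

namespace Heron

variable {E ι κ : Type*} [NormedAddCommGroup E] [Fintype ι] [Fintype κ]

def cost (x : ι → E) (y : κ → E) : ℝ := ∑ i, ∑ j, ‖x i - y j‖

theorem cost_comm (x : ι → E) (y : κ → E) : cost y x = cost x y := by
  simp only [cost, norm_sub_rev (y _)]
  exact Finset.sum_comm

theorem continuous_cost : Continuous fun p : (ι → E) × (κ → E) => cost p.1 p.2 := by
  unfold cost
  fun_prop

theorem norm_sub_le_cost (x : ι → E) (y : κ → E) (i : ι) (j : κ) : ‖x i - y j‖ ≤ cost x y :=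
  calc ‖x i - y j‖ ≤ ∑ j', ‖x i - y j'‖ :=
        Finset.single_le_sum (f := fun j' => ‖x i - y j'‖) (fun _ _ => norm_nonneg _)
          (Finset.mem_univ j)
    _ ≤ cost x y :=
        Finset.single_le_sum (f := fun i' => ∑ j', ‖x i' - y j'‖)
          (fun _ _ => Finset.sum_nonneg fun _ _ => norm_nonneg _) (Finset.mem_univ i)

theorem norm_le_add_two_mul_cost [Nonempty κ] {x : ι → E} {y : κ → E} {i₀ : ι} {r : ℝ}
    (hr : ‖x i₀‖ ≤ r) : ‖(x, y)‖ ≤ r + 2 * cost x y := by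
  have hcost : 0 ≤ cost x y :=
    (norm_nonneg _).trans (norm_sub_le_cost x y i₀ (Classical.arbitrary κ))
  have hy : ∀ j, ‖y j‖ ≤ r + cost x y := fun j =>
    calc ‖y j‖ ≤ ‖x i₀‖ + ‖x i₀ - y j‖ := norm_le_norm_add_norm_sub (x i₀) (y j)
      _ ≤ r + cost x y := add_le_add hr (norm_sub_le_cost x y i₀ j)
  have hx : ∀ i, ‖x i‖ ≤ r + 2 * cost x y := fun i =>
    let j := Classical.arbitrary κ
    calc ‖x i‖ ≤ ‖y j‖ + ‖x i - y j‖ := norm_le_norm_add_norm_sub' (x i) (y j)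
      _ ≤ r + 2 * cost x y := by linarith [hy j, norm_sub_le_cost x y i j]
  have hr0 : 0 ≤ r := (norm_nonneg _).trans hr
  rw [Prod.norm_def]
  exact max_le ((pi_norm_le_iff_of_nonneg (by linarith)).2 hx)
    ((pi_norm_le_iff_of_nonneg (by linarith)).2 fun j => (hy j).trans (by linarith))

theorem isBounded_sublevel_cost [Nonempty κ] {S : ι → Set E} {C : κ → Set E} {i₀ : ι}
    (hS : Bornology.IsBounded (S i₀)) (M : ℝ) :
    Bornology.IsBounded {p ∈ univ.pi S ×ˢ univ.pi C | cost p.1 p.2 ≤ M} := by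
  obtain ⟨r, hr⟩ := isBounded_iff_forall_norm_le.1 hS
  refine isBounded_iff_forall_norm_le.2 ⟨r + 2 * M, fun p ⟨⟨hx, _⟩, hM⟩ => ?_⟩
  calc ‖p‖ ≤ r + 2 * cost p.1 p.2 := norm_le_add_two_mul_cost (hr _ (hx i₀ (mem_univ _)))
    _ ≤ r + 2 * M := by linarith

theorem exists_forall_cost_le_of_isBounded [ProperSpace E] [Nonempty κ]
    {S : ι → Set E} {C : κ → Set E}
    (hSne : ∀ i, (S i).Nonempty) (hScl : ∀ i, IsClosed (S i))
    (hCne : ∀ j, (C j).Nonempty) (hCcl : ∀ j, IsClosed (C j))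
    {i₀ : ι} (hS : Bornology.IsBounded (S i₀)) :
    ∃ x y, (∀ i, x i ∈ S i) ∧ (∀ j, y j ∈ C j) ∧
      ∀ x' y', (∀ i, x' i ∈ S i) → (∀ j, y' j ∈ C j) → cost x y ≤ cost x' y' := by
  set A := univ.pi S ×ˢ univ.pi C
  have hA : IsClosed A :=
    (isClosed_set_pi fun i _ => hScl i).prod (isClosed_set_pi fun j _ => hCcl j)
  obtain ⟨p₀, hp₀⟩ : A.Nonempty := (univ_pi_nonempty_iff.2 hSne).prod (univ_pi_nonempty_iff.2 hCne)
  have hK := (isBounded_sublevel_cost (C := C) hS (cost p₀.1 p₀.2)).isCompact_closure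
  have hcocompact : ∀ᶠ p in cocompact _ ⊓ 𝓟 A, cost p₀.1 p₀.2 ≤ cost p.1 p.2 := by
    filter_upwards [mem_inf_of_left hK.compl_mem_cocompact, mem_inf_of_right (mem_principal_self A)]
      with p hpK hpA
    by_contra! hlt
    exact hpK (subset_closure ⟨hpA, hlt.le⟩)
  obtain ⟨p, ⟨hx, hy⟩, hmin⟩ := continuous_cost.continuousOn.exists_isMinOn' hA hp₀ hcocompact
  exact ⟨p.1, p.2, fun i => hx i (mem_univ i), fun j => hy j (mem_univ j),
    fun x' y' hx' hy' => hmin (mk_mem_prod (fun i _ => hx' i) fun j _ => hy' j)⟩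

end Heron

theorem generalized_km_Heron_existence_general
    (n k m : ℕ) (hk : 0 < k) (hm : 0 < m)
    (S : Fin k → Set (EuclideanSpace ℝ (Fin n)))
    (C : Fin m → Set (EuclideanSpace ℝ (Fin n)))
    (hSne : ∀ i, (S i).Nonempty) (hScl : ∀ i, IsClosed (S i))
    (hCne : ∀ j, (C j).Nonempty) (hCcl : ∀ j, IsClosed (C j))
    (hbdd : (∃ i, Bornology.IsBounded (S i)) ∨ (∃ j, Bornology.IsBounded (C j))) :
    ∃ (x : Fin k → EuclideanSpace ℝ (Fin n)) (y : Fin m → EuclideanSpace ℝ (Fin n)),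
      (∀ i, x i ∈ S i) ∧ (∀ j, y j ∈ C j) ∧
      ∀ (x' : Fin k → EuclideanSpace ℝ (Fin n)) (y' : Fin m → EuclideanSpace ℝ (Fin n)),
        (∀ i, x' i ∈ S i) → (∀ j, y' j ∈ C j) →
        ∑ i, ∑ j, ‖x i - y j‖ ≤ ∑ i, ∑ j, ‖x' i - y' j‖ := by
  have := Fin.pos_iff_nonempty.1 hk
  have := Fin.pos_iff_nonempty.1 hm
  rcases hbdd with ⟨i₀, hS⟩ | ⟨j₀, hC⟩
  · exact Heron.exists_forall_cost_le_of_isBounded hSne hScl hCne hCcl hS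
  · obtain ⟨y, x, hy, hx, hmin⟩ := Heron.exists_forall_cost_le_of_isBounded hCne hCcl hSne hScl hC
    refine ⟨x, y, hx, hy, fun x' y' hx' hy' => ?_⟩
    have := hmin y' x' hy' hx'
    rwa [Heron.cost_comm x y, Heron.cost_comm x' y'] at this

/-- **Existence of an optimal solution for the generalized (k,m)-Heron problem.**
If at least one of the sets `S 1, …, S k, C 1, …, C m` is bounded, then there is a
feasible point `Z* = (x*, y*)` minimizing `F(x,y) = ∑ i ∑ j ‖x i - y j‖` over the
feasible set. -/
theorem generalized_km_Heron_existence
    (n k m : ℕ) (hn : 0 < n) (hk : 0 < k) (hm : 0 < m)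
    (S : Fin k → Set (EuclideanSpace ℝ (Fin n)))
    (C : Fin m → Set (EuclideanSpace ℝ (Fin n)))
    (hSne : ∀ i, (S i).Nonempty) (hScl : ∀ i, IsClosed (S i)) (hScv : ∀ i, Convex ℝ (S i))
    (hCne : ∀ j, (C j).Nonempty) (hCcl : ∀ j, IsClosed (C j)) (hCcv : ∀ j, Convex ℝ (C j))
    (hbdd : (∃ i, Bornology.IsBounded (S i)) ∨ (∃ j, Bornology.IsBounded (C j))) :
    ∃ (x : Fin k → EuclideanSpace ℝ (Fin n)) (y : Fin m → EuclideanSpace ℝ (Fin n)),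
      (∀ i, x i ∈ S i) ∧ (∀ j, y j ∈ C j) ∧
      ∀ (x' : Fin k → EuclideanSpace ℝ (Fin n)) (y' : Fin m → EuclideanSpace ℝ (Fin n)),
        (∀ i, x' i ∈ S i) → (∀ j, y' j ∈ C j) →
        ∑ i, ∑ j, ‖x i - y j‖ ≤ ∑ i, ∑ j, ‖x' i - y' j‖ :=
  generalized_km_Heron_existence_general n k m hk hm S C hSne hScl hCne hCcl hbdd
end

section
/- Let S ⊆ ℝ^n be a nonempty closed convex set and let x_1, …, x_N be points such that, for some v ∈ ℝ^n and c ∈ ℝ, ⟨v, x_i⟩ < c for all i and ⟨v, s⟩ > c for all s ∈ S. If x̄ lies in the interior of S, then x̄ is not a minimizer of D(x) = Σ_{i=1}^N ‖x − x_i‖ over S; that is, there exists x ∈ S with D(x) < D(x̄). -/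
open scoped RealInnerProductSpace
open Filter Topology

/-! Moving `x̄` a little in the direction `-v` stays inside `S`, and it strictly decreases every
distance `‖x̄ - x i‖`, because `-v` makes an acute angle with each `x i - x̄`:
`‖y - t • v‖² = ‖y‖² - t (2 ⟪v, y⟫ - t ‖v‖²)` with `⟪v, x̄ - x i⟫ > 0`. -/

section

variable {E : Type*} [NormedAddCommGroup E] [InnerProductSpace ℝ E]

theorem eventually_norm_sub_smul_lt_norm {y v : E} (h : 0 < ⟪v, y⟫) :
    ∀ᶠ t : ℝ in 𝓝[>] 0, ‖y - t • v‖ < ‖y‖ := by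
  have hlim : Tendsto (fun t : ℝ => t * ‖v‖ ^ 2) (𝓝 0) (𝓝 0) :=
    Continuous.tendsto' (by fun_prop) 0 0 (by simp)
  have hsmall : ∀ᶠ t : ℝ in 𝓝 0, t * ‖v‖ ^ 2 < 2 * ⟪v, y⟫ :=
    hlim.eventually_lt_const (by linarith)
  filter_upwards [self_mem_nhdsWithin, hsmall.filter_mono nhdsWithin_le_nhds]
    with t (ht : 0 < t) hts
  have hsq : ‖y - t • v‖ ^ 2 < ‖y‖ ^ 2 := by
    rw [norm_sub_sq_real, real_inner_smul_right, real_inner_comm, norm_smul,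
      Real.norm_of_nonneg ht.le]
    nlinarith
  exact lt_of_pow_lt_pow_left₀ 2 (norm_nonneg y) hsq

theorem eventually_sum_norm_sub_smul_sub_lt {ι : Type*} [Fintype ι] [Nonempty ι]
    {x : ι → E} {v xbar : E} (h : ∀ i, 0 < ⟪v, xbar - x i⟫) :
    ∀ᶠ t : ℝ in 𝓝[>] 0, ∑ i, ‖xbar - t • v - x i‖ < ∑ i, ‖xbar - x i‖ := by
  filter_upwards [eventually_all.2 fun i => eventually_norm_sub_smul_lt_norm (h i)] with t ht
  refine Finset.sum_lt_sum_of_nonempty Finset.univ_nonempty fun i _ => ?_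
  simpa only [sub_right_comm] using ht i

theorem eventually_sub_smul_mem_of_mem_interior {S : Set E} {xbar : E} (v : E)
    (hxbar : xbar ∈ interior S) : ∀ᶠ t : ℝ in 𝓝[>] 0, xbar - t • v ∈ S := by
  have hcont : Tendsto (fun t : ℝ => xbar - t • v) (𝓝 0) (𝓝 xbar) :=
    Continuous.tendsto' (by fun_prop) 0 xbar (by simp)
  exact (hcont.eventually (mem_interior_iff_mem_nhds.mp hxbar)).filter_mono nhdsWithin_le_nhds

end

theorem interior_point_not_minimizer_of_separated_general
    (n N : ℕ) (hN : 0 < N)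
    (S : Set (EuclideanSpace ℝ (Fin n)))
    (x : Fin N → EuclideanSpace ℝ (Fin n)) (v : EuclideanSpace ℝ (Fin n)) (c : ℝ)
    (hx : ∀ i, ⟪v, x i⟫ < c) (hS : ∀ s ∈ S, c < ⟪v, s⟫)
    (xbar : EuclideanSpace ℝ (Fin n)) (hxbar : xbar ∈ interior S) :
    ∃ z ∈ S, ∑ i, ‖z - x i‖ < ∑ i, ‖xbar - x i‖ := by
  have : Nonempty (Fin N) := Fin.pos_iff_nonempty.mp hN
  have hacute : ∀ i, 0 < ⟪v, xbar - x i⟫ := fun i => by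
    rw [inner_sub_right, sub_pos]
    exact (hx i).trans (hS xbar (interior_subset hxbar))
  obtain ⟨_, hmem, hlt⟩ := ((eventually_sub_smul_mem_of_mem_interior v hxbar).and
    (eventually_sum_norm_sub_smul_sub_lt hacute)).exists
  exact ⟨_, hmem, hlt⟩

/-- If the points `x 1, …, x N` and the nonempty closed convex set `S` are strictly
separated by the hyperplane `{z : ⟪v, z⟫ = c}`, then no interior point `x̄` of `S`
minimizes `D(x) = ∑ i ‖x - x i‖` over `S`: there is `z ∈ S` with `D(z) < D(x̄)`. -/
theorem interior_point_not_minimizer_of_separated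
    (n N : ℕ) (hN : 0 < N)
    (S : Set (EuclideanSpace ℝ (Fin n)))
    (hSne : S.Nonempty) (hScl : IsClosed S) (hScv : Convex ℝ S)
    (x : Fin N → EuclideanSpace ℝ (Fin n)) (v : EuclideanSpace ℝ (Fin n)) (c : ℝ)
    (hx : ∀ i, ⟪v, x i⟫ < c) (hS : ∀ s ∈ S, c < ⟪v, s⟫)
    (xbar : EuclideanSpace ℝ (Fin n)) (hxbar : xbar ∈ interior S) :
    ∃ z ∈ S, ∑ i, ‖z - x i‖ < ∑ i, ‖xbar - x i‖ :=
  interior_point_not_minimizer_of_separated_general n N hN S x v c hx hS xbar hxbar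
end

section
/- Suppose each S_i and each C_j is strictly convex, and there exist v ∈ ℝ^n and c ∈ ℝ such that ⟨v, s⟩ > c for every s ∈ S_i (i = 1,…,k) and ⟨v, t⟩ < c for every t ∈ C_j (j = 1,…,m). Then the generalized (k,m)-Heron problem has at most one optimal solution: if Z and W are both minimizers of F over A, then Z = W. -/
/-!
If `(x, y)` and `(p, q)` are both optimal, then so is their midpoint `(x̄, ȳ)`, because the cost is
convex. If `x i ≠ p i`, strict convexity puts `x̄ i` in the interior of `S i`, so `x̄ i` is a local
minimum of `z ↦ ∑ j, ‖z - ȳ j‖`. But by the separation every `x̄ i - ȳ j` has positive inner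
product with `v`, so the derivative of this function in the direction `v` is positive.
Swapping the two families (and replacing `v` by `-v`) gives `y = q`.
-/

open scoped RealInnerProductSpace

theorem isMinOn_component_of_forall_sum_le {ι α β : Type*} [Fintype ι] [DecidableEq ι]
    [AddCommMonoid β] [PartialOrder β] [IsOrderedCancelAddMonoid β] (g : ι → α → β) {S : ι → Set α} {x : ι → α} (hx : ∀ i, x i ∈ S i)
    (hmin : ∀ x' : ι → α, (∀ i, x' i ∈ S i) → ∑ i, g i (x i) ≤ ∑ i, g i (x' i)) (i : ι) :
    IsMinOn (g i) (S i) (x i) := by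
  intro z hz
  have hle := hmin (Function.update x i z) fun j => by
    rcases eq_or_ne j i with rfl | h
    · simpa using hz
    · simpa [h] using hx j
  have hrest : ∑ j ∈ Finset.univ.erase i, g j (Function.update x i z j) =
      ∑ j ∈ Finset.univ.erase i, g j (x j) :=
    Finset.sum_congr rfl fun j hj => by rw [Function.update_of_ne (Finset.ne_of_mem_erase hj)]
  rw [← Finset.add_sum_erase _ _ (Finset.mem_univ i),
    ← Finset.add_sum_erase _ _ (Finset.mem_univ i), hrest, Function.update_self] at hle
  exact le_of_add_le_add_right hle

theorem sum_sum_norm_sub_comm {E ι κ : Type*} [SeminormedAddCommGroup E] [Fintype ι]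
    [Fintype κ] (x : ι → E) (y : κ → E) :
    ∑ i, ∑ j, ‖x i - y j‖ = ∑ j, ∑ i, ‖y j - x i‖ := by
  rw [Finset.sum_comm]
  simp only [norm_sub_rev]

section NormedSpace

variable {E : Type*} [NormedAddCommGroup E] [NormedSpace ℝ E] {ι κ : Type*} [Fintype ι]
  [Fintype κ]

theorem StrictConvex.midpoint_mem_interior {s : Set E} (hs : StrictConvex ℝ s) {x y : E}
    (hx : x ∈ s) (hy : y ∈ s) (hxy : x ≠ y) : midpoint ℝ x y ∈ interior s :=
  hs.openSegment_subset hx hy hxy (midpoint_mem_openSegment x y)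

theorem sum_sum_norm_midpoint_sub_midpoint_le (x p : ι → E) (y q : κ → E) :
    ∑ i, ∑ j, ‖midpoint ℝ (x i) (p i) - midpoint ℝ (y j) (q j)‖ ≤
      (∑ i, ∑ j, ‖x i - y j‖ + ∑ i, ∑ j, ‖p i - q j‖) / 2 := by
  simp only [add_div, ← Finset.sum_add_distrib, Finset.sum_div, ← dist_eq_norm]
  exact Finset.sum_le_sum fun i _ => Finset.sum_le_sum fun j _ =>
    (dist_midpoint_midpoint_le (x i) (p i) (y j) (q j)).trans_eq (add_div _ _ _)

end NormedSpace

section InnerProductSpace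

variable {E : Type*} [NormedAddCommGroup E] [InnerProductSpace ℝ E]

theorem HasDerivAt.norm_of_ne_zero {f : ℝ → E} {f' : E} {t : ℝ} (hf : HasDerivAt f f' t)
    (h0 : f t ≠ 0) : HasDerivAt (‖f ·‖) (⟪f t, f'⟫ / ‖f t‖) t := by
  have h := hf.norm_sq.sqrt (by positivity)
  simp only [Real.sqrt_sq (norm_nonneg _)] at h
  convert h using 1
  field_simp

theorem not_isLocalMin_sum_norm_sub {ι : Type*} [Fintype ι] [Nonempty ι] (b : ι → E) {z v : E}
    (hv : ∀ j, 0 < ⟪v, z - b j⟫) : ¬IsLocalMin (fun w => ∑ j, ‖w - b j‖) z := by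
  intro hmin
  have hne : ∀ j, z - b j ≠ 0 := fun j h => by simpa [h] using hv j
  have hline : IsLocalMin (fun t : ℝ => ∑ j, ‖z + t • v - b j‖) 0 :=
    IsLocalMin.comp_continuous (f := fun w => ∑ j, ‖w - b j‖) (g := fun t : ℝ => z + t • v)
      (b := 0) (by simpa using hmin) (by fun_prop)
  have hderiv : HasDerivAt (fun t : ℝ => ∑ j, ‖z + t • v - b j‖)
      (∑ j, ⟪z - b j, v⟫ / ‖z - b j‖) 0 := by
    refine HasDerivAt.fun_sum fun j _ => ?_
    have hlin : HasDerivAt (fun t : ℝ => z + t • v - b j) v 0 := by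
      simpa using (((hasDerivAt_id (0 : ℝ)).smul_const v).const_add z).sub_const (b j)
    simpa using hlin.norm_of_ne_zero (by simpa using hne j)
  have hpos : 0 < ∑ j, ⟪z - b j, v⟫ / ‖z - b j‖ :=
    Finset.sum_pos (fun j _ => div_pos (real_inner_comm v _ ▸ hv j) (norm_pos_iff.2 (hne j)))
      Finset.univ_nonempty
  exact hpos.ne' (hline.hasDerivAt_eq_zero hderiv)

theorem notMem_interior_of_forall_sum_sum_norm_sub_le {ι κ : Type*} [Fintype ι] [Fintype κ]
    [Nonempty κ] {S : ι → Set E} {x : ι → E} {y : κ → E} {v : E} (hx : ∀ i, x i ∈ S i)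
    (hsep : ∀ i j, ⟪v, y j⟫ < ⟪v, x i⟫)
    (hmin : ∀ x' : ι → E, (∀ i, x' i ∈ S i) →
      ∑ i, ∑ j, ‖x i - y j‖ ≤ ∑ i, ∑ j, ‖x' i - y j‖) (i : ι) :
    x i ∉ interior (S i) := by
  classical
  intro hint
  have hloc : IsLocalMin (fun w => ∑ j, ‖w - y j‖) (x i) :=
    (isMinOn_component_of_forall_sum_le (fun _ w => ∑ j, ‖w - y j‖) hx hmin i).isLocalMin
      (mem_interior_iff_mem_nhds.1 hint)
  exact not_isLocalMin_sum_norm_sub y (fun j => by rw [inner_sub_right]; linarith [hsep i j]) hloc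

end InnerProductSpace

theorem generalized_km_Heron_uniqueness_general
    (n k m : ℕ) (hk : 0 < k) (hm : 0 < m)
    (S : Fin k → Set (EuclideanSpace ℝ (Fin n)))
    (C : Fin m → Set (EuclideanSpace ℝ (Fin n)))
    (hSstrict : ∀ i, StrictConvex ℝ (S i)) (hCstrict : ∀ j, StrictConvex ℝ (C j))
    (v : EuclideanSpace ℝ (Fin n)) (c : ℝ)
    (hSsep : ∀ i, ∀ s ∈ S i, c < ⟪v, s⟫) (hCsep : ∀ j, ∀ t ∈ C j, ⟪v, t⟫ < c)
    (x p : Fin k → EuclideanSpace ℝ (Fin n)) (y q : Fin m → EuclideanSpace ℝ (Fin n))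
    (hx : ∀ i, x i ∈ S i) (hy : ∀ j, y j ∈ C j)
    (hp : ∀ i, p i ∈ S i) (hq : ∀ j, q j ∈ C j)
    (hZopt : ∀ (x' : Fin k → EuclideanSpace ℝ (Fin n)) (y' : Fin m → EuclideanSpace ℝ (Fin n)),
      (∀ i, x' i ∈ S i) → (∀ j, y' j ∈ C j) →
      ∑ i, ∑ j, ‖x i - y j‖ ≤ ∑ i, ∑ j, ‖x' i - y' j‖)
    (hWopt : ∀ (x' : Fin k → EuclideanSpace ℝ (Fin n)) (y' : Fin m → EuclideanSpace ℝ (Fin n)),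
      (∀ i, x' i ∈ S i) → (∀ j, y' j ∈ C j) →
      ∑ i, ∑ j, ‖p i - q j‖ ≤ ∑ i, ∑ j, ‖x' i - y' j‖) :
    x = p ∧ y = q := by
  have : Nonempty (Fin k) := ⟨⟨0, hk⟩⟩
  have : Nonempty (Fin m) := ⟨⟨0, hm⟩⟩
  set mx := fun i => midpoint ℝ (x i) (p i)
  set my := fun j => midpoint ℝ (y j) (q j)
  have hmx : ∀ i, mx i ∈ S i := fun i => (hSstrict i).convex.midpoint_mem (hx i) (hp i)
  have hmy : ∀ j, my j ∈ C j := fun j => (hCstrict j).convex.midpoint_mem (hy j) (hq j)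
  have hsep : ∀ i j, ⟪v, my j⟫ < ⟪v, mx i⟫ := fun i j =>
    (hCsep j _ (hmy j)).trans (hSsep i _ (hmx i))
  have hopt : ∀ (x' : Fin k → EuclideanSpace ℝ (Fin n)) (y' : Fin m → EuclideanSpace ℝ (Fin n)),
      (∀ i, x' i ∈ S i) → (∀ j, y' j ∈ C j) →
      ∑ i, ∑ j, ‖mx i - my j‖ ≤ ∑ i, ∑ j, ‖x' i - y' j‖ := fun x' y' hx' hy' =>
    (sum_sum_norm_midpoint_sub_midpoint_le x p y q).trans
      (by linarith [hZopt x' y' hx' hy', hWopt x' y' hx' hy'])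
  refine ⟨funext fun i => ?_, funext fun j => ?_⟩
  · by_contra hne
    exact notMem_interior_of_forall_sum_sum_norm_sub_le hmx hsep
      (fun x' hx' => hopt x' my hx' hmy) i ((hSstrict i).midpoint_mem_interior (hx i) (hp i) hne)
  · by_contra hne
    refine notMem_interior_of_forall_sum_sum_norm_sub_le (v := -v) hmy
      (fun j i => by simpa only [inner_neg_left, neg_lt_neg_iff] using hsep i j)
      (fun y' hy' => ?_) j ((hCstrict j).midpoint_mem_interior (hy j) (hq j) hne)
    have hle := hopt mx y' hmx hy'
    rwa [sum_sum_norm_sub_comm mx, sum_sum_norm_sub_comm mx] at hle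

/-- **Uniqueness of the optimal solution.**  If all the sets `S i` and `C j` are strictly
convex and the two families are strictly separated by a hyperplane `{z : ⟪v, z⟫ = c}`,
then the generalized (k,m)-Heron problem has at most one optimal solution. -/
theorem generalized_km_Heron_uniqueness
    (n k m : ℕ) (hn : 0 < n) (hk : 0 < k) (hm : 0 < m)
    (S : Fin k → Set (EuclideanSpace ℝ (Fin n)))
    (C : Fin m → Set (EuclideanSpace ℝ (Fin n)))
    (hSne : ∀ i, (S i).Nonempty) (hScl : ∀ i, IsClosed (S i)) (hScv : ∀ i, Convex ℝ (S i))
    (hCne : ∀ j, (C j).Nonempty) (hCcl : ∀ j, IsClosed (C j)) (hCcv : ∀ j, Convex ℝ (C j))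
    (hSstrict : ∀ i, StrictConvex ℝ (S i)) (hCstrict : ∀ j, StrictConvex ℝ (C j))
    (v : EuclideanSpace ℝ (Fin n)) (c : ℝ)
    (hSsep : ∀ i, ∀ s ∈ S i, c < ⟪v, s⟫) (hCsep : ∀ j, ∀ t ∈ C j, ⟪v, t⟫ < c)
    (x p : Fin k → EuclideanSpace ℝ (Fin n)) (y q : Fin m → EuclideanSpace ℝ (Fin n))
    (hx : ∀ i, x i ∈ S i) (hy : ∀ j, y j ∈ C j)
    (hp : ∀ i, p i ∈ S i) (hq : ∀ j, q j ∈ C j)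
    (hZopt : ∀ (x' : Fin k → EuclideanSpace ℝ (Fin n)) (y' : Fin m → EuclideanSpace ℝ (Fin n)),
      (∀ i, x' i ∈ S i) → (∀ j, y' j ∈ C j) →
      ∑ i, ∑ j, ‖x i - y j‖ ≤ ∑ i, ∑ j, ‖x' i - y' j‖)
    (hWopt : ∀ (x' : Fin k → EuclideanSpace ℝ (Fin n)) (y' : Fin m → EuclideanSpace ℝ (Fin n)),
      (∀ i, x' i ∈ S i) → (∀ j, y' j ∈ C j) →
      ∑ i, ∑ j, ‖p i - q j‖ ≤ ∑ i, ∑ j, ‖x' i - y' j‖) :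
    x = p ∧ y = q :=
  generalized_km_Heron_uniqueness_general n k m hk hm S C hSstrict hCstrict v c hSsep hCsep x p y q
    hx hy hp hq hZopt hWopt
end

section
/- Assume S_i ∩ C_j = ∅ for all i, j, and let Z* = (x_1*, …, x_k*, y_1*, …, y_m*) ∈ A be feasible (so x_i* ≠ y_j* for all i, j). Then Z* is an optimal solution of the generalized (k,m)-Heron problem if and only if for each i = 1,…,k the vector −Σ_{j=1}^m (x_i* − y_j*)/‖x_i* − y_j*‖ belongs to the normal cone N_{S_i}(x_i*), and for each j = 1,…,m the vector −Σ_{i=1}^k (y_j* − x_i*)/‖y_j* − x_i*‖ belongs to the normal cone N_{C_j}(y_j*). -/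
/-
Disjointness gives `x i ≠ y j`, so the objective is differentiable at `(x, y)`. Fixing `y`,
the point `x i` minimizes `∑ j, ‖· - y j‖` over the convex set `S i`, so Fermat's rule puts
minus its gradient `∑ j, (x i - y j)/‖x i - y j‖` in the normal cone; symmetrically for `y j`.
Conversely, the objective is convex: summing the subgradient inequality
`‖b‖ ≥ ‖a‖ + ⟪a/‖a‖, b - a⟫` over all pairs bounds it below by its linearization at `(x, y)`,
whose linear part is nonnegative on the feasible set by the normal cone conditions.
-/

open scoped RealInnerProductSpace

def normalCone {E : Type*} [NormedAddCommGroup E] [InnerProductSpace ℝ E]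
    (s : Set E) (x : E) : Set E :=
  {v : E | ∀ z ∈ s, ⟪v, z - x⟫ ≤ 0}

theorem IsMinOn.of_sum_univ_pi {α ι : Type*} [Fintype ι] [DecidableEq ι] {S : ι → Set α}
    {Φ : ι → α → ℝ} {x : ι → α} (h : IsMinOn (fun x' => ∑ i, Φ i (x' i)) (Set.univ.pi S) x)
    (hx : x ∈ Set.univ.pi S) (i : ι) : IsMinOn (Φ i) (S i) (x i) := fun a ha => by
  have hsum : ∀ b, ∑ j, Φ j (Function.update x i b j) = Φ i b + ∑ j ∈ {i}ᶜ, Φ j (x j) := by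
    intro b
    simp only [Function.apply_update (fun j => Φ j)]
    exact Finset.sum_update_of_mem (Finset.mem_univ i) _ _
  have hle : ∑ j, Φ j (x j) ≤ ∑ j, Φ j (Function.update x i a j) :=
    h ((Set.update_mem_pi_iff_of_mem hx).2 fun _ => ha)
  have hx_eq : ∑ j, Φ j (x j) = Φ i (x i) + ∑ j ∈ {i}ᶜ, Φ j (x j) := by
    simpa only [Function.update_eq_self] using hsum (x i)
  rw [hx_eq, hsum] at hle
  exact le_of_add_le_add_right hle

section InnerProductSpace

variable {E : Type*} [NormedAddCommGroup E] [InnerProductSpace ℝ E]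

theorem neg_mem_normalCone_of_isMinOn {s : Set E} {f : E → ℝ} {g x : E} (hs : Convex ℝ s)
    (hx : x ∈ s) (hf : HasFDerivAt f (innerSL ℝ g) x) (hmin : IsMinOn f s x) :
    -g ∈ normalCone s x := fun z hz => by
  have := hmin.localize.hasFDerivWithinAt_nonneg hf.hasFDerivWithinAt
    (sub_mem_posTangentConeAt_of_segment_subset (hs.segment_subset hx hz))
  simpa [inner_neg_left] using this

theorem hasFDerivAt_norm {x : E} (hx : x ≠ 0) :
    HasFDerivAt (‖·‖) (innerSL ℝ (‖x‖⁻¹ • x)) x := by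
  have h := (hasStrictFDerivAt_norm_sq x).hasFDerivAt.sqrt (by positivity)
  simp only [Real.sqrt_sq (norm_nonneg _)] at h
  refine h.congr_fderiv ?_
  rw [map_smul, ← Nat.cast_smul_eq_nsmul ℝ 2, smul_smul]
  congr 1
  field_simp
  ring

theorem hasFDerivAt_sum_norm_sub {κ : Type*} [Fintype κ] {y : κ → E} {x : E}
    (hxy : ∀ j, x ≠ y j) :
    HasFDerivAt (fun z => ∑ j, ‖z - y j‖) (innerSL ℝ (∑ j, ‖x - y j‖⁻¹ • (x - y j))) x := by
  rw [map_sum]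
  refine HasFDerivAt.fun_sum fun j _ => ?_
  simpa only [ContinuousLinearMap.comp_id, Function.comp_def] using
    (hasFDerivAt_norm (sub_ne_zero.2 (hxy j))).comp x (hasFDerivAt_sub_const (y j))

theorem norm_add_inner_sub_le (a b : E) : ‖a‖ + ⟪‖a‖⁻¹ • a, b - a⟫ ≤ ‖b‖ := by
  rcases eq_or_ne a 0 with rfl | ha
  · simp
  have hna : ‖a‖ ≠ 0 := norm_ne_zero_iff.mpr ha
  calc ‖a‖ + ⟪‖a‖⁻¹ • a, b - a⟫ = ⟪‖a‖⁻¹ • a, b⟫ := by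
        simp only [inner_sub_right, real_inner_smul_left, real_inner_self_eq_norm_sq]
        field_simp
        ring
    _ ≤ ‖‖a‖⁻¹ • a‖ * ‖b‖ := real_inner_le_norm _ _
    _ = ‖b‖ := by rw [norm_smul, norm_inv, norm_norm, inv_mul_cancel₀ hna, one_mul]

end InnerProductSpace

section Heron

variable {E : Type*} [NormedAddCommGroup E] {ι κ : Type*} [Fintype ι] [Fintype κ]

def heronCost (x : ι → E) (y : κ → E) : ℝ := ∑ i, ∑ j, ‖x i - y j‖

theorem heronCost_comm (x : ι → E) (y : κ → E) : heronCost y x = heronCost x y := by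
  simp only [heronCost, norm_sub_rev (y _)]
  exact Finset.sum_comm

variable [InnerProductSpace ℝ E]

theorem neg_sum_mem_normalCone_of_heronCost_le {S : ι → Set E} (hS : ∀ i, Convex ℝ (S i))
    {x : ι → E} {y : κ → E} (hx : ∀ i, x i ∈ S i) (hxy : ∀ i j, x i ≠ y j)
    (hmin : ∀ x', (∀ i, x' i ∈ S i) → heronCost x y ≤ heronCost x' y) (i : ι) :
    -(∑ j, ‖x i - y j‖⁻¹ • (x i - y j)) ∈ normalCone (S i) (x i) := by
  classical
  refine neg_mem_normalCone_of_isMinOn (hS i) (hx i) (hasFDerivAt_sum_norm_sub (hxy i)) ?_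
  exact IsMinOn.of_sum_univ_pi (Φ := fun _ z => ∑ j, ‖z - y j‖)
    (fun x' hx' => hmin x' fun i => hx' i (Set.mem_univ i)) (fun i _ => hx i) i

theorem heronCost_add_inner_le (x x' : ι → E) (y y' : κ → E) :
    heronCost x y + ∑ i, ⟪∑ j, ‖x i - y j‖⁻¹ • (x i - y j), x' i - x i⟫
      + ∑ j, ⟪∑ i, ‖y j - x i‖⁻¹ • (y j - x i), y' j - y j⟫ ≤ heronCost x' y' := by
  have hpair : ∀ i j, ‖x i - y j‖ + ⟪‖x i - y j‖⁻¹ • (x i - y j), x' i - x i⟫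
      + ⟪‖y j - x i‖⁻¹ • (y j - x i), y' j - y j⟫ ≤ ‖x' i - y' j‖ := by
    intro i j
    have h := norm_add_inner_sub_le (x i - y j) (x' i - y' j)
    have hrev : ‖y j - x i‖⁻¹ • (y j - x i) = -(‖x i - y j‖⁻¹ • (x i - y j)) := by
      rw [norm_sub_rev, ← smul_neg, neg_sub]
    rw [sub_sub_sub_comm, inner_sub_right] at h
    rw [hrev, inner_neg_left]
    linarith
  calc _ = ∑ i, ∑ j, (‖x i - y j‖ + ⟪‖x i - y j‖⁻¹ • (x i - y j), x' i - x i⟫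
        + ⟪‖y j - x i‖⁻¹ • (y j - x i), y' j - y j⟫) := by
        simp only [heronCost, sum_inner, Finset.sum_add_distrib]
        rw [Finset.sum_comm (γ := κ)]
    _ ≤ heronCost x' y' := Finset.sum_le_sum fun i _ => Finset.sum_le_sum fun j _ => hpair i j

theorem heronCost_le_of_neg_sum_mem_normalCone {S : ι → Set E} {C : κ → Set E}
    {x x' : ι → E} {y y' : κ → E}
    (hxN : ∀ i, -(∑ j, ‖x i - y j‖⁻¹ • (x i - y j)) ∈ normalCone (S i) (x i))
    (hyN : ∀ j, -(∑ i, ‖y j - x i‖⁻¹ • (y j - x i)) ∈ normalCone (C j) (y j))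
    (hx' : ∀ i, x' i ∈ S i) (hy' : ∀ j, y' j ∈ C j) : heronCost x y ≤ heronCost x' y' := by
  have hxlin : 0 ≤ ∑ i, ⟪∑ j, ‖x i - y j‖⁻¹ • (x i - y j), x' i - x i⟫ :=
    Finset.sum_nonneg fun i _ => by simpa [inner_neg_left] using hxN i _ (hx' i)
  have hylin : 0 ≤ ∑ j, ⟪∑ i, ‖y j - x i‖⁻¹ • (y j - x i), y' j - y j⟫ :=
    Finset.sum_nonneg fun j _ => by simpa [inner_neg_left] using hyN j _ (hy' j)
  linarith [heronCost_add_inner_le x x' y y']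

end Heron

theorem generalized_km_Heron_optimality_conditions_general
    (n k m : ℕ)
    (S : Fin k → Set (EuclideanSpace ℝ (Fin n)))
    (C : Fin m → Set (EuclideanSpace ℝ (Fin n)))
    (hScv : ∀ i, Convex ℝ (S i))
    (hCcv : ∀ j, Convex ℝ (C j))
    (hdisj : ∀ i j, S i ∩ C j = ∅)
    (x : Fin k → EuclideanSpace ℝ (Fin n)) (y : Fin m → EuclideanSpace ℝ (Fin n))
    (hx : ∀ i, x i ∈ S i) (hy : ∀ j, y j ∈ C j) :
    (∀ (x' : Fin k → EuclideanSpace ℝ (Fin n)) (y' : Fin m → EuclideanSpace ℝ (Fin n)),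
      (∀ i, x' i ∈ S i) → (∀ j, y' j ∈ C j) →
      ∑ i, ∑ j, ‖x i - y j‖ ≤ ∑ i, ∑ j, ‖x' i - y' j‖) ↔
    ((∀ i, -(∑ j, (‖x i - y j‖)⁻¹ • (x i - y j)) ∈ normalCone (S i) (x i)) ∧
     (∀ j, -(∑ i, (‖y j - x i‖)⁻¹ • (y j - x i)) ∈ normalCone (C j) (y j))) := by
  have hxy : ∀ i j, x i ≠ y j := fun i j h =>
    Set.notMem_empty (x i) (hdisj i j ▸ ⟨hx i, h ▸ hy j⟩)
  constructor
  · intro hopt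
    refine ⟨neg_sum_mem_normalCone_of_heronCost_le hScv hx hxy fun x' hx' => hopt x' y hx' hy,
      neg_sum_mem_normalCone_of_heronCost_le hCcv hy (fun j i h => hxy i j h.symm) ?_⟩
    intro y' hy'
    rw [heronCost_comm, heronCost_comm x y']
    exact hopt x y' hx hy'
  · rintro ⟨hxN, hyN⟩ x' y' hx' hy'
    exact heronCost_le_of_neg_sum_mem_normalCone hxN hyN hx' hy'

/-- **First-order optimality conditions for the generalized (k,m)-Heron problem.**
Assume `S i ∩ C j = ∅` for all `i, j`, and let `Z* = (x, y)` be feasible.  Then `Z*` is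
optimal iff for each `i` the vector `-∑ j (x i - y j)/‖x i - y j‖` lies in the normal
cone `N_{S i}(x i)`, and for each `j` the vector `-∑ i (y j - x i)/‖y j - x i‖` lies in
the normal cone `N_{C j}(y j)`. -/
theorem generalized_km_Heron_optimality_conditions
    (n k m : ℕ) (hn : 0 < n) (hk : 0 < k) (hm : 0 < m)
    (S : Fin k → Set (EuclideanSpace ℝ (Fin n)))
    (C : Fin m → Set (EuclideanSpace ℝ (Fin n)))
    (hSne : ∀ i, (S i).Nonempty) (hScl : ∀ i, IsClosed (S i)) (hScv : ∀ i, Convex ℝ (S i))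
    (hCne : ∀ j, (C j).Nonempty) (hCcl : ∀ j, IsClosed (C j)) (hCcv : ∀ j, Convex ℝ (C j))
    (hdisj : ∀ i j, S i ∩ C j = ∅)
    (x : Fin k → EuclideanSpace ℝ (Fin n)) (y : Fin m → EuclideanSpace ℝ (Fin n))
    (hx : ∀ i, x i ∈ S i) (hy : ∀ j, y j ∈ C j) :
    (∀ (x' : Fin k → EuclideanSpace ℝ (Fin n)) (y' : Fin m → EuclideanSpace ℝ (Fin n)),
      (∀ i, x' i ∈ S i) → (∀ j, y' j ∈ C j) →
      ∑ i, ∑ j, ‖x i - y j‖ ≤ ∑ i, ∑ j, ‖x' i - y' j‖) ↔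
    ((∀ i, -(∑ j, (‖x i - y j‖)⁻¹ • (x i - y j)) ∈ normalCone (S i) (x i)) ∧
     (∀ j, -(∑ i, (‖y j - x i‖)⁻¹ • (y j - x i)) ∈ normalCone (C j) (y j))) :=
  generalized_km_Heron_optimality_conditions_general n k m S C hScv hCcv hdisj x y hx hy
end

section
/- The function F : (ℝ^n)^k × (ℝ^n)^m → ℝ defined by F(x,y) = Σ_{i=1}^k Σ_{j=1}^m ‖x_i − y_j‖ is Lipschitz continuous on ℝ^{n(k+m)} (with the product Euclidean norm) with Lipschitz constant G = √(km(k+m)). -/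
/-!
Each term moves by at most `‖x i - x' i‖ + ‖y j - y' j‖`, so `F` moves by at most
`m · ∑ ‖x i - x' i‖ + k · ∑ ‖y j - y' j‖`. This is the pairing of the vector of displacements
with the weight vector `(m, …, m, k, …, k)`, whose Euclidean norm is `√(k m² + m k²) = √(k m (k + m))`;
Cauchy–Schwarz finishes.
-/

open Finset

theorem abs_sum_sum_norm_sub_sub_le {ι κ E : Type*} [Fintype ι] [Fintype κ]
    [SeminormedAddCommGroup E] (x x' : ι → E) (y y' : κ → E) :
    |(∑ i, ∑ j, ‖x i - y j‖) - ∑ i, ∑ j, ‖x' i - y' j‖| ≤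
      Fintype.card κ * ∑ i, ‖x i - x' i‖ + Fintype.card ι * ∑ j, ‖y j - y' j‖ := by
  have pointwise (i : ι) (j : κ) :
      |‖x i - y j‖ - ‖x' i - y' j‖| ≤ ‖x i - x' i‖ + ‖y j - y' j‖ := by
    simpa only [dist_eq_norm, Real.norm_eq_abs] using dist_dist_dist_le (x i) (y j) (x' i) (y' j)
  calc |(∑ i, ∑ j, ‖x i - y j‖) - ∑ i, ∑ j, ‖x' i - y' j‖|
      = |∑ i, ∑ j, (‖x i - y j‖ - ‖x' i - y' j‖)| := by simp only [sum_sub_distrib]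
    _ ≤ ∑ i, ∑ j, |‖x i - y j‖ - ‖x' i - y' j‖| :=
        (abs_sum_le_sum_abs _ _).trans (sum_le_sum fun i _ => abs_sum_le_sum_abs _ _)
    _ ≤ ∑ i, ∑ j, (‖x i - x' i‖ + ‖y j - y' j‖) :=
        sum_le_sum fun i _ => sum_le_sum fun j _ => pointwise i j
    _ = Fintype.card κ * ∑ i, ‖x i - x' i‖ + Fintype.card ι * ∑ j, ‖y j - y' j‖ := by
        simp [sum_add_distrib, mul_sum]

theorem mul_sum_add_mul_sum_le_sqrt_mul_sqrt {ι κ : Type*} [Fintype ι] [Fintype κ]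
    (c d : ℝ) (a : ι → ℝ) (b : κ → ℝ) :
    c * ∑ i, a i + d * ∑ j, b j ≤
      √(Fintype.card ι * c ^ 2 + Fintype.card κ * d ^ 2) * √(∑ i, a i ^ 2 + ∑ j, b j ^ 2) := by
  simpa [Fintype.sum_sum_type, mul_sum] using
    Real.sum_mul_le_sqrt_mul_sqrt univ (Sum.elim (fun _ : ι => c) fun _ : κ => d) (Sum.elim a b)

theorem generalized_km_Heron_objective_lipschitz_general
    (n k m : ℕ) :
    ∀ (x x' : Fin k → EuclideanSpace ℝ (Fin n)) (y y' : Fin m → EuclideanSpace ℝ (Fin n)),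
      |(∑ i, ∑ j, ‖x i - y j‖) - ∑ i, ∑ j, ‖x' i - y' j‖| ≤
        Real.sqrt ((k : ℝ) * m * (k + m)) *
          Real.sqrt ((∑ i, ‖x i - x' i‖ ^ 2) + ∑ j, ‖y j - y' j‖ ^ 2) := by
  intro x x' y y'
  have hG : (k : ℝ) * m * (k + m) = k * (m : ℝ) ^ 2 + m * (k : ℝ) ^ 2 := by ring
  calc _ ≤ m * ∑ i, ‖x i - x' i‖ + k * ∑ j, ‖y j - y' j‖ := by
        simpa using abs_sum_sum_norm_sub_sub_le x x' y y'
    _ ≤ _ := by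
        simpa [hG] using mul_sum_add_mul_sum_le_sqrt_mul_sqrt (m : ℝ) k
          (fun i => ‖x i - x' i‖) fun j => ‖y j - y' j‖

/-- **Lipschitz continuity of the generalized (k,m)-Heron objective.**
The function `F(x,y) = ∑ i ∑ j ‖x i - y j‖` is Lipschitz on `ℝ^{n(k+m)}` (with the
product Euclidean norm `‖Z‖² = ∑ i ‖x i‖² + ∑ j ‖y j‖²`) with Lipschitz constant
`G = √(k·m·(k+m))`. -/
theorem generalized_km_Heron_objective_lipschitz
    (n k m : ℕ) (hn : 0 < n) (hk : 0 < k) (hm : 0 < m) :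
    ∀ (x x' : Fin k → EuclideanSpace ℝ (Fin n)) (y y' : Fin m → EuclideanSpace ℝ (Fin n)),
      |(∑ i, ∑ j, ‖x i - y j‖) - ∑ i, ∑ j, ‖x' i - y' j‖| ≤
        Real.sqrt ((k : ℝ) * m * (k + m)) *
          Real.sqrt ((∑ i, ‖x i - x' i‖ ^ 2) + ∑ j, ‖y j - y' j‖ ^ 2) :=
  generalized_km_Heron_objective_lipschitz_general n k m
end

section
/- Suppose at least one of the sets S_1, …, S_k, C_1, …, C_m is bounded, so that the set of optimal solutions of the generalized (k,m)-Heron problem is nonempty. Let {Z_t} ⊆ A be generated by the projected subgradient iteration Z_{t+1} = proj_A(Z_t − α_t g_t), where g_t is a subgradient of F at Z_t and the step sizes satisfy α_t > 0, Σ_{t=0}^∞ α_t = ∞, and Σ_{t=0}^∞ α_t² < ∞. Then the sequence {Z_t} converges to some optimal solution of the problem. -/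
/-!
For every minimizer `w`, convexity of `A` and the subgradient inequality give
`‖Z (t+1) - w‖² ≤ ‖Z t - w‖² - 2 α t (F (Z t) - F w) + α t² L²`, where `L` bounds the subgradients
(here `F` is Lipschitz). Since `∑ α t² < ∞`, the distances `‖Z t - w‖` converge and
`∑ α t (F (Z t) - F w) < ∞`; as `∑ α t = ∞`, `F (Z t)` comes arbitrarily close to the optimal value
infinitely often. A cluster point of the corresponding (bounded) subsequence is then a minimizer,
and since the distance to it converges, the whole sequence converges to it. A minimizer exists
because, as soon as one coordinate stays bounded, the sublevel sets of `F` on `A` are bounded.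
-/

open scoped RealInnerProductSpace
open Filter Topology

section RealSequences

variable {d c e : ℕ → ℝ}

theorem summable_of_succ_le_sub_add (hd : ∀ t, 0 ≤ d t) (hc : ∀ t, 0 ≤ c t) (he₀ : ∀ t, 0 ≤ e t)
    (he : Summable e) (h : ∀ t, d (t + 1) ≤ d t - c t + e t) : Summable c := by
  have hpartial : ∀ N, ∑ t ∈ Finset.range N, c t + d N ≤ d 0 + ∑ t ∈ Finset.range N, e t := by
    intro N
    induction N with
    | zero => simp
    | succ N ih =>
      rw [Finset.sum_range_succ, Finset.sum_range_succ]
      linarith [h N]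
  refine summable_of_sum_range_le (c := d 0 + ∑' t, e t) hc fun N => ?_
  linarith [hpartial N, hd N, he.sum_le_tsum (Finset.range N) fun t _ => he₀ t]

theorem exists_tendsto_of_succ_le_add (hd : ∀ t, 0 ≤ d t) (he₀ : ∀ t, 0 ≤ e t)
    (he : Summable e) (h : ∀ t, d (t + 1) ≤ d t + e t) : ∃ l, Tendsto d atTop (𝓝 l) := by
  set u : ℕ → ℝ := fun t => d t - ∑ s ∈ Finset.range t, e s
  have hu : Antitone u := antitone_nat_of_succ_le fun t => by
    simp only [u, Finset.sum_range_succ]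
    linarith [h t]
  have hu_bdd : BddBelow (Set.range u) := ⟨-∑' s, e s, by
    rintro _ ⟨t, rfl⟩
    linarith [hd t, he.sum_le_tsum (Finset.range t) fun s _ => he₀ s]⟩
  refine ⟨(⨅ t, u t) + ∑' s, e s, ?_⟩
  simpa [u] using (tendsto_atTop_ciInf hu hu_bdd).add he.hasSum.tendsto_sum_nat

theorem frequently_lt_of_summable_mul {α f : ℕ → ℝ} (hα : ∀ t, 0 ≤ α t)
    (hdiv : Tendsto (fun N => ∑ t ∈ Finset.range N, α t) atTop atTop)
    (hsum : Summable fun t => α t * f t) {ε : ℝ} (hε : 0 < ε) :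
    ∃ᶠ t in atTop, f t < ε := by
  intro hfε
  have hα_le : ∀ᶠ t in atTop, α t ≤ α t * f t / ε := by
    filter_upwards [hfε] with t ht
    rw [le_div_iff₀ hε]
    exact mul_le_mul_of_nonneg_left (not_lt.mp ht) (hα t)
  have hα_sum : Summable α :=
    (hsum.div_const ε).of_norm_bounded_eventually (by
      filter_upwards [Nat.cofinite_eq_atTop ▸ hα_le] with t ht
      rwa [Real.norm_of_nonneg (hα t)])
  exact not_tendsto_atTop_of_tendsto_nhds hα_sum.hasSum.tendsto_sum_nat hdiv

end RealSequences

theorem tendsto_of_tendsto_dist_of_subseq {X : Type*} [PseudoMetricSpace X] {x : ℕ → X} {z : X}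
    {l : ℝ} {φ : ℕ → ℕ} (hl : Tendsto (fun t => dist (x t) z) atTop (𝓝 l))
    (hφ : Tendsto φ atTop atTop) (hsub : Tendsto (x ∘ φ) atTop (𝓝 z)) :
    Tendsto x atTop (𝓝 z) := by
  have hl0 : l = 0 :=
    tendsto_nhds_unique (hl.comp hφ) (tendsto_iff_dist_tendsto_zero.mp hsub)
  exact tendsto_iff_dist_tendsto_zero.mpr (hl0 ▸ hl)

section ProjectedSubgradient

variable {E : Type*} [NormedAddCommGroup E] [InnerProductSpace ℝ E]

theorem norm_sub_le_of_forall_norm_sub_le {A : Set E} (hA : Convex ℝ A) {p u w : E}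
    (hp : p ∈ A) (hmin : ∀ v ∈ A, ‖p - u‖ ≤ ‖v - u‖) (hw : w ∈ A) : ‖p - w‖ ≤ ‖u - w‖ := by
  have : Nonempty A := ⟨⟨p, hp⟩⟩
  have hinf : ‖u - p‖ = ⨅ v : A, ‖u - v‖ :=
    le_antisymm (le_ciInf fun v => by simpa only [norm_sub_rev u] using hmin v v.2)
      (ciInf_le ⟨0, by rintro _ ⟨v, rfl⟩; exact norm_nonneg _⟩ (⟨p, hp⟩ : A))
  have hvar : ⟪u - p, w - p⟫ ≤ 0 := (norm_eq_iInf_iff_real_inner_le_zero hA hp).mp hinf w hw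
  have hexpand : ‖u - w‖ ^ 2 = ‖u - p‖ ^ 2 - 2 * ⟪u - p, w - p⟫ + ‖p - w‖ ^ 2 := by
    rw [← norm_sub_rev w p, ← norm_sub_sq_real, sub_sub_sub_cancel_right]
  refine pow_le_pow_iff_left₀ (norm_nonneg _) (norm_nonneg _) two_ne_zero |>.mp ?_
  nlinarith [sq_nonneg ‖u - p‖]

theorem LipschitzWith.norm_le_of_subgradient {F : E → ℝ} {K : NNReal} (hF : LipschitzWith K F)
    {z g : E} (hg : ∀ W, F z + ⟪g, W - z⟫ ≤ F W) : ‖g‖ ≤ K := by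
  have hsq : ‖g‖ ^ 2 ≤ K * ‖g‖ := by
    have h₁ := hg (z + g)
    have h₂ := hF.le_add_mul (z + g) z
    rw [add_sub_cancel_left, real_inner_self_eq_norm_sq] at h₁
    rw [dist_eq_norm, add_sub_cancel_left] at h₂
    linarith
  rcases (norm_nonneg g).eq_or_lt with h | h
  · rw [← h]; exact K.2
  · nlinarith

structure IsProjSubgradientSeq (A : Set E) (F : E → ℝ) (α : ℕ → ℝ) (Z g : ℕ → E) : Prop where
  mem : ∀ t, Z t ∈ A
  subgradient : ∀ t W, F (Z t) + ⟪g t, W - Z t⟫ ≤ F W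
  proj : ∀ t, ∀ w ∈ A, ‖Z (t + 1) - (Z t - α t • g t)‖ ≤ ‖w - (Z t - α t • g t)‖

namespace IsProjSubgradientSeq

variable {A : Set E} {F : E → ℝ} {α : ℕ → ℝ} {Z g : ℕ → E}

theorem sq_norm_sub_succ_le (hZ : IsProjSubgradientSeq A F α Z g) (hA : Convex ℝ A)
    (hα : ∀ t, 0 ≤ α t) {w : E} (hw : w ∈ A) (t : ℕ) :
    ‖Z (t + 1) - w‖ ^ 2 ≤ ‖Z t - w‖ ^ 2 - 2 * α t * (F (Z t) - F w) + α t ^ 2 * ‖g t‖ ^ 2 := by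
  have hinner : F (Z t) - F w ≤ ⟪g t, Z t - w⟫ := by
    have := hZ.subgradient t w
    rw [← neg_sub (Z t) w, inner_neg_right] at this
    linarith
  calc ‖Z (t + 1) - w‖ ^ 2 ≤ ‖(Z t - w) - α t • g t‖ ^ 2 := by
        rw [sub_right_comm]
        gcongr
        exact norm_sub_le_of_forall_norm_sub_le hA (hZ.mem _) (hZ.proj t) hw
    _ = ‖Z t - w‖ ^ 2 - 2 * α t * ⟪g t, Z t - w⟫ + α t ^ 2 * ‖g t‖ ^ 2 := by
        rw [norm_sub_sq_real, real_inner_smul_right, norm_smul, real_inner_comm, mul_pow,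
          Real.norm_eq_abs, sq_abs]
        ring
    _ ≤ _ := by nlinarith [hα t]

theorem exists_tendsto_dist_and_summable_mul_sub (hZ : IsProjSubgradientSeq A F α Z g)
    (hA : Convex ℝ A) {L : ℝ} (hgL : ∀ t, ‖g t‖ ≤ L) (hα : ∀ t, 0 ≤ α t)
    (hαsq : Summable fun t => α t ^ 2) {w : E} (hw : w ∈ A) (hwmin : IsMinOn F A w) :
    (∃ l, Tendsto (fun t => dist (Z t) w) atTop (𝓝 l)) ∧
      Summable fun t => α t * (F (Z t) - F w) := by
  have hgap : ∀ t, 0 ≤ F (Z t) - F w := fun t => sub_nonneg.mpr (hwmin (hZ.mem t))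
  have hrec : ∀ t, ‖Z (t + 1) - w‖ ^ 2 ≤
      ‖Z t - w‖ ^ 2 - 2 * (α t * (F (Z t) - F w)) + α t ^ 2 * L ^ 2 := fun t => by
    have := hZ.sq_norm_sub_succ_le hA hα hw t
    have : ‖g t‖ ^ 2 ≤ L ^ 2 := pow_le_pow_left₀ (norm_nonneg _) (hgL t) 2
    nlinarith [sq_nonneg (α t)]
  have hgap' : ∀ t, 0 ≤ 2 * (α t * (F (Z t) - F w)) := fun t =>
    mul_nonneg zero_le_two (mul_nonneg (hα t) (hgap t))
  have he₀ : ∀ t, 0 ≤ α t ^ 2 * L ^ 2 := fun t => by positivity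
  have he : Summable fun t => α t ^ 2 * L ^ 2 := hαsq.mul_right _
  have hd : ∀ t, 0 ≤ ‖Z t - w‖ ^ 2 := fun t => sq_nonneg _
  constructor
  · obtain ⟨l, hl⟩ := exists_tendsto_of_succ_le_add hd he₀ he
      fun t => (hrec t).trans (by linarith [hgap' t])
    refine ⟨√l, ?_⟩
    simpa [dist_eq_norm, Real.sqrt_sq (norm_nonneg _)] using hl.sqrt
  · exact (summable_of_succ_le_sub_add hd hgap' he₀ he hrec).mul_left (1 / 2)
      |>.congr fun t => by ring

theorem exists_tendsto_isMinOn [ProperSpace E] (hZ : IsProjSubgradientSeq A F α Z g)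
    (hAcl : IsClosed A) (hAcv : Convex ℝ A) (hF : Continuous F) (hmin : ∃ w ∈ A, IsMinOn F A w)
    {L : ℝ} (hgL : ∀ t, ‖g t‖ ≤ L) (hαpos : ∀ t, 0 < α t)
    (hαdiv : Tendsto (fun N => ∑ t ∈ Finset.range N, α t) atTop atTop)
    (hαsq : Summable fun t => α t ^ 2) :
    ∃ z ∈ A, IsMinOn F A z ∧ Tendsto Z atTop (𝓝 z) := by
  have hα : ∀ t, 0 ≤ α t := fun t => (hαpos t).le
  obtain ⟨w, hwA, hwmin⟩ := hmin
  obtain ⟨⟨l, hl⟩, hsum⟩ :=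
    hZ.exists_tendsto_dist_and_summable_mul_sub hAcv hgL hα hαsq hwA hwmin
  have hfreq : ∀ p : ℕ, ∃ᶠ t in atTop, F (Z t) - F w < 1 / ((p : ℝ) + 1) := fun p =>
    frequently_lt_of_summable_mul hα hαdiv hsum (by positivity)
  obtain ⟨φ, hφ, hφgap⟩ := extraction_forall_of_frequently hfreq
  obtain ⟨R, hR⟩ := hl.bddAbove_range
  obtain ⟨z, -, ψ, hψ, hz⟩ := tendsto_subseq_of_bounded (Metric.isBounded_closedBall (x := w))
    fun p => Metric.mem_closedBall.mpr (hR ⟨φ p, rfl⟩)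
  have hzA : z ∈ A := hAcl.mem_of_tendsto hz (Eventually.of_forall fun _ => hZ.mem _)
  have hFz : F z ≤ F w := by
    have hbound : Tendsto (fun q => F w + 1 / ((ψ q : ℝ) + 1)) atTop (𝓝 (F w)) := by
      simpa using (tendsto_one_div_add_atTop_nhds_zero_nat.comp hψ.tendsto_atTop).const_add (F w)
    refine le_of_tendsto_of_tendsto' ((hF.tendsto z).comp hz) hbound fun q => ?_
    have := hφgap (ψ q)
    simp only [Function.comp_apply]
    linarith
  have hzmin : IsMinOn F A z := fun x hx => hFz.trans (hwmin hx)
  obtain ⟨⟨l', hl'⟩, -⟩ :=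
    hZ.exists_tendsto_dist_and_summable_mul_sub hAcv hgL hα hαsq hzA hzmin
  exact ⟨z, hzA, hzmin, tendsto_of_tendsto_dist_of_subseq hl'
    (hφ.tendsto_atTop.comp hψ.tendsto_atTop) hz⟩

end IsProjSubgradientSeq

end ProjectedSubgradient

theorem exists_isMinOn_of_isBounded_sublevel {X : Type*} [PseudoMetricSpace X] [ProperSpace X]
    {A : Set X} {F : X → ℝ} (hA : IsClosed A) (hF : ContinuousOn F A) {x₀ : X} (hx₀ : x₀ ∈ A)
    (hB : Bornology.IsBounded {x | x ∈ A ∧ F x ≤ F x₀}) : ∃ x ∈ A, IsMinOn F A x := by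
  refine hF.exists_isMinOn' hA hx₀ ?_
  filter_upwards [mem_inf_of_left hB.isCompact_closure.compl_mem_cocompact,
    mem_inf_of_right (mem_principal_self A)] with x hxB hxA
  by_contra h
  exact hxB (subset_closure ⟨hxA, (not_le.mp h).le⟩)

section Heron

variable {ι κ E : Type*} [Fintype ι] [Fintype κ] [SeminormedAddCommGroup E] {p : ENNReal}

def heronObjective (Z : PiLp p fun _ : ι ⊕ κ => E) : ℝ :=
  ∑ i, ∑ j, ‖Z (Sum.inl i) - Z (Sum.inr j)‖

theorem norm_sub_le_heronObjective (Z : PiLp p fun _ : ι ⊕ κ => E) (i : ι) (j : κ) :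
    ‖Z (Sum.inl i) - Z (Sum.inr j)‖ ≤ heronObjective Z :=
  (Finset.single_le_sum (f := fun j => ‖Z (Sum.inl i) - Z (Sum.inr j)‖)
    (fun _ _ => norm_nonneg _) (Finset.mem_univ j)).trans
  (Finset.single_le_sum (f := fun i => ∑ j, ‖Z (Sum.inl i) - Z (Sum.inr j)‖)
    (fun _ _ => Finset.sum_nonneg fun _ _ => norm_nonneg _) (Finset.mem_univ i))

theorem norm_sub_le_two_mul_heronObjective [Nonempty ι] [Nonempty κ]
    (Z : PiLp p fun _ : ι ⊕ κ => E) (s s' : ι ⊕ κ) : ‖Z s - Z s'‖ ≤ 2 * heronObjective Z := by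
  have hedge := norm_sub_le_heronObjective Z
  have hnonneg : 0 ≤ heronObjective Z := (norm_nonneg _).trans (hedge (Classical.arbitrary ι)
    (Classical.arbitrary κ))
  rcases s with i | j <;> rcases s' with i' | j'
  · have := norm_sub_le_norm_sub_add_norm_sub (Z (Sum.inl i)) (Z (Sum.inr (Classical.arbitrary κ)))
      (Z (Sum.inl i'))
    rw [norm_sub_rev (Z (Sum.inr _)) (Z (Sum.inl i'))] at this
    linarith [hedge i (Classical.arbitrary κ), hedge i' (Classical.arbitrary κ)]
  · linarith [hedge i j']
  · rw [norm_sub_rev]; linarith [hedge i' j]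
  · have := norm_sub_le_norm_sub_add_norm_sub (Z (Sum.inr j)) (Z (Sum.inl (Classical.arbitrary ι)))
      (Z (Sum.inr j'))
    rw [norm_sub_rev (Z (Sum.inr j)) (Z (Sum.inl _))] at this
    linarith [hedge (Classical.arbitrary ι) j, hedge (Classical.arbitrary ι) j']

variable [Fact (1 ≤ p)]

theorem heronObjective_le_add_mul_dist (W V : PiLp p fun _ : ι ⊕ κ => E) :
    heronObjective W ≤ heronObjective V + 2 * Fintype.card ι * Fintype.card κ * dist W V := by
  have hterm : ∀ i j, ‖W (Sum.inl i) - W (Sum.inr j)‖ ≤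
      ‖V (Sum.inl i) - V (Sum.inr j)‖ + 2 * dist W V := fun i j => by
    have h₁ := norm_sub_norm_le (W (Sum.inl i) - W (Sum.inr j)) (V (Sum.inl i) - V (Sum.inr j))
    rw [sub_sub_sub_comm] at h₁
    have h₂ := norm_sub_le (W (Sum.inl i) - V (Sum.inl i)) (W (Sum.inr j) - V (Sum.inr j))
    have h₃ := PiLp.dist_apply_le W V (Sum.inl i)
    have h₄ := PiLp.dist_apply_le W V (Sum.inr j)
    rw [dist_eq_norm] at h₃ h₄
    linarith
  calc heronObjective W ≤ ∑ i, ∑ j, (‖V (Sum.inl i) - V (Sum.inr j)‖ + 2 * dist W V) :=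
        Finset.sum_le_sum fun i _ => Finset.sum_le_sum fun j _ => hterm i j
    _ = _ := by
        simp only [Finset.sum_add_distrib, Finset.sum_const, Finset.card_univ, nsmul_eq_mul,
          heronObjective]
        ring

theorem lipschitzWith_heronObjective :
    LipschitzWith (2 * Fintype.card ι * Fintype.card κ)
      (heronObjective : (PiLp p fun _ : ι ⊕ κ => E) → ℝ) :=
  LipschitzWith.of_le_add_mul _ fun W V => by
    exact_mod_cast heronObjective_le_add_mul_dist W V

theorem isBounded_setOf_heronObjective_le [Nonempty ι] [Nonempty κ] (s₀ : ι ⊕ κ) {T : Set E}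
    (hT : Bornology.IsBounded T) (c : ℝ) :
    Bornology.IsBounded {Z : PiLp p (fun _ : ι ⊕ κ => E) | Z s₀ ∈ T ∧ heronObjective Z ≤ c} := by
  obtain ⟨M, hM⟩ := isBounded_iff_forall_norm_le.mp hT
  refine ((PiLp.antilipschitzWith_ofLp p _).isBounded_preimage
    (Bornology.IsBounded.pi fun _ => Metric.isBounded_closedBall (x := 0) (r := M + 2 * c))).subset
    fun Z ⟨hZT, hZc⟩ => Set.mem_univ_pi.mpr fun s => ?_
  rw [mem_closedBall_zero_iff]
  linarith [norm_le_norm_add_norm_sub' (Z s) (Z s₀), hM _ hZT,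
    norm_sub_le_two_mul_heronObjective Z s s₀]

end Heron

theorem generalized_km_Heron_PSA_iterate_convergence_general
    (n k m : ℕ) (hk : 0 < k) (hm : 0 < m)
    (S : Fin k → Set (EuclideanSpace ℝ (Fin n)))
    (C : Fin m → Set (EuclideanSpace ℝ (Fin n)))
    (hSne : ∀ i, (S i).Nonempty) (hScl : ∀ i, IsClosed (S i)) (hScv : ∀ i, Convex ℝ (S i))
    (hCne : ∀ j, (C j).Nonempty) (hCcl : ∀ j, IsClosed (C j)) (hCcv : ∀ j, Convex ℝ (C j))
    (hbdd : (∃ i, Bornology.IsBounded (S i)) ∨ (∃ j, Bornology.IsBounded (C j)))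
    (A : Set (PiLp 2 (fun _ : Fin k ⊕ Fin m => EuclideanSpace ℝ (Fin n))))
    (hA : A = {Z | (∀ i, Z (Sum.inl i) ∈ S i) ∧ (∀ j, Z (Sum.inr j) ∈ C j)})
    (F : PiLp 2 (fun _ : Fin k ⊕ Fin m => EuclideanSpace ℝ (Fin n)) → ℝ)
    (hF : ∀ Z, F Z = ∑ i, ∑ j, ‖Z (Sum.inl i) - Z (Sum.inr j)‖)
    (Z g : ℕ → PiLp 2 (fun _ : Fin k ⊕ Fin m => EuclideanSpace ℝ (Fin n)))
    (α : ℕ → ℝ)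
    (hαpos : ∀ t, 0 < α t)
    (hαdiv : Tendsto (fun N => ∑ t ∈ Finset.range N, α t) atTop atTop)
    (hαsq : Summable fun t => (α t) ^ 2)
    (hZmem : ∀ t, Z t ∈ A)
    (hg : ∀ t W, F (Z t) + ⟪g t, W - Z t⟫ ≤ F W)
    (hproj : ∀ t, ∀ w ∈ A, ‖Z (t + 1) - (Z t - α t • g t)‖ ≤ ‖w - (Z t - α t • g t)‖) :
    ∃ Zopt, Zopt ∈ A ∧ (∀ W ∈ A, F Zopt ≤ F W) ∧ Tendsto Z atTop (nhds Zopt) := by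
  obtain rfl : F = heronObjective := funext hF
  have hA' : A = WithLp.ofLp ⁻¹' Set.univ.pi (Sum.elim S C) := by
    rw [hA]; ext; simp [Sum.forall]
  have hAcl : IsClosed A := hA' ▸
    (isClosed_set_pi fun s _ => s.rec hScl hCcl).preimage (PiLp.continuous_ofLp 2 _)
  have hAcv : Convex ℝ A := hA' ▸
    (convex_pi fun s _ => s.rec hScv hCcv).linear_preimage (WithLp.linearEquiv 2 ℝ _).toLinearMap
  have hAne : A.Nonempty := hA' ▸
    ⟨WithLp.toLp 2 fun s => (s.rec hSne hCne : (Sum.elim S C s).Nonempty).some,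
      fun s _ => Set.Nonempty.some_mem _⟩
  obtain ⟨s₀, hs₀⟩ : ∃ s, Bornology.IsBounded (Sum.elim S C s) :=
    hbdd.elim (fun ⟨i, h⟩ => ⟨Sum.inl i, h⟩) fun ⟨j, h⟩ => ⟨Sum.inr j, h⟩
  have : Nonempty (Fin k) := ⟨⟨0, hk⟩⟩
  have : Nonempty (Fin m) := ⟨⟨0, hm⟩⟩
  have hcoord : ∀ W ∈ A, W s₀ ∈ Sum.elim S C s₀ := fun W hW => by
    rw [hA'] at hW; exact hW s₀ (Set.mem_univ _)
  have hmin : ∃ w ∈ A, IsMinOn heronObjective A w :=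
    exists_isMinOn_of_isBounded_sublevel hAcl lipschitzWith_heronObjective.continuous.continuousOn
      hAne.some_mem ((isBounded_setOf_heronObjective_le s₀ hs₀ _).subset fun W hW =>
        ⟨hcoord W hW.1, hW.2⟩)
  obtain ⟨z, hzA, hzmin, hz⟩ := IsProjSubgradientSeq.exists_tendsto_isMinOn ⟨hZmem, hg, hproj⟩
    hAcl hAcv lipschitzWith_heronObjective.continuous hmin
    (fun t => lipschitzWith_heronObjective.norm_le_of_subgradient (hg t)) hαpos hαdiv hαsq
  exact ⟨z, hzA, isMinOn_iff.mp hzmin, hz⟩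

/-- **Convergence of the iterates of the PSA for the (k,m)-Heron problem.**
The variable `Z = (x, y)` is encoded as an element of the Euclidean product space
`PiLp 2 (fun _ : Fin k ⊕ Fin m => ℝⁿ)`, with `Z (inl i) = x i` and `Z (inr j) = y j`.
If at least one of the sets is bounded (so the set of optimal solutions is nonempty),
and `{Z t} ⊆ A` is generated by `Z (t+1) = proj_A (Z t - α t • g t)` with subgradients
`g t` of `F` at `Z t` and step sizes `α t > 0`, `∑ α t = ∞`, `∑ α t ² < ∞`, then the
sequence `Z t` converges to some optimal solution of the problem. -/
theorem generalized_km_Heron_PSA_iterate_convergence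
    (n k m : ℕ) (hn : 0 < n) (hk : 0 < k) (hm : 0 < m)
    (S : Fin k → Set (EuclideanSpace ℝ (Fin n)))
    (C : Fin m → Set (EuclideanSpace ℝ (Fin n)))
    (hSne : ∀ i, (S i).Nonempty) (hScl : ∀ i, IsClosed (S i)) (hScv : ∀ i, Convex ℝ (S i))
    (hCne : ∀ j, (C j).Nonempty) (hCcl : ∀ j, IsClosed (C j)) (hCcv : ∀ j, Convex ℝ (C j))
    (hbdd : (∃ i, Bornology.IsBounded (S i)) ∨ (∃ j, Bornology.IsBounded (C j)))
    (A : Set (PiLp 2 (fun _ : Fin k ⊕ Fin m => EuclideanSpace ℝ (Fin n))))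
    (hA : A = {Z | (∀ i, Z (Sum.inl i) ∈ S i) ∧ (∀ j, Z (Sum.inr j) ∈ C j)})
    (F : PiLp 2 (fun _ : Fin k ⊕ Fin m => EuclideanSpace ℝ (Fin n)) → ℝ)
    (hF : ∀ Z, F Z = ∑ i, ∑ j, ‖Z (Sum.inl i) - Z (Sum.inr j)‖)
    (Z g : ℕ → PiLp 2 (fun _ : Fin k ⊕ Fin m => EuclideanSpace ℝ (Fin n)))
    (α : ℕ → ℝ)
    (hαpos : ∀ t, 0 < α t)
    (hαdiv : Tendsto (fun N => ∑ t ∈ Finset.range N, α t) atTop atTop)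
    (hαsq : Summable fun t => (α t) ^ 2)
    (hZmem : ∀ t, Z t ∈ A)
    (hg : ∀ t W, F (Z t) + ⟪g t, W - Z t⟫ ≤ F W)
    (hproj : ∀ t, ∀ w ∈ A, ‖Z (t + 1) - (Z t - α t • g t)‖ ≤ ‖w - (Z t - α t • g t)‖) :
    ∃ Zopt, Zopt ∈ A ∧ (∀ W ∈ A, F Zopt ≤ F W) ∧ Tendsto Z atTop (nhds Zopt) :=
  generalized_km_Heron_PSA_iterate_convergence_general n k m hk hm S C hSne hScl hScv hCne hCcl hCcv
    hbdd A hA F hF Z g α hαpos hαdiv hαsq hZmem hg hproj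
end

section
/- In ℝ², let S_1 be the closed disc of radius 2 centered at (−6,6), S_2 the closed disc of radius 2 centered at (6,6), C_1 the closed disc of radius 1 centered at (−2,6), and C_2 the closed disc of radius 1 centered at (2,6). Then the minimum of F(x_1,x_2,y_1,y_2) = ‖x_1−y_1‖ + ‖x_1−y_2‖ + ‖x_2−y_1‖ + ‖x_2−y_2‖ over x_1 ∈ S_1, x_2 ∈ S_2, y_1 ∈ C_1, y_2 ∈ C_2 equals 16, and it is attained at more than one feasible point; for instance, both (x_1,x_2,y_1,y_2) = ((−4,6),(4,6),(−2,6),(2,6)) and ((−4,6),(4,6),(−1,6),(1,6)) are optimal. -/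
/-! The lower bound `16` holds because every `xᵢ` is within `2` of its centre, so
`‖x₁ - x₂‖ ≥ 12 - 4 = 8`, while by the triangle inequality through `y₁` and through `y₂`
the four distances add up to at least `2 ‖x₁ - x₂‖`. It is attained whenever
`x₁ = (-4,6)`, `x₂ = (4,6)` and `y₁, y₂` lie on the segment between them. -/

/-- The point `(a, b)` of the Euclidean plane `ℝ²`. -/
noncomputable def pt (a b : ℝ) : EuclideanSpace ℝ (Fin 2) :=
  (WithLp.equiv 2 (Fin 2 → ℝ)).symm ![a, b]

section Metric

variable {α : Type*} [PseudoMetricSpace α]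

lemma dist_centers_sub_radii_le_dist {c₁ c₂ x₁ x₂ : α} {r₁ r₂ : ℝ}
    (hx₁ : x₁ ∈ Metric.closedBall c₁ r₁) (hx₂ : x₂ ∈ Metric.closedBall c₂ r₂) :
    dist c₁ c₂ - (r₁ + r₂) ≤ dist x₁ x₂ := by
  rw [Metric.mem_closedBall] at hx₁ hx₂
  linarith [dist_triangle4 c₁ x₁ x₂ c₂, dist_comm c₁ x₁]

lemma two_mul_dist_le_dist_add_dist_add_dist_add_dist (x₁ x₂ y₁ y₂ : α) :
    2 * dist x₁ x₂ ≤ dist x₁ y₁ + dist x₁ y₂ + dist x₂ y₁ + dist x₂ y₂ := by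
  linarith [dist_triangle x₁ y₁ x₂, dist_triangle x₁ y₂ x₂, dist_comm y₁ x₂, dist_comm y₂ x₂]

end Metric

lemma pt_apply_zero (a b : ℝ) : pt a b 0 = a := rfl

lemma dist_pt (a b c d : ℝ) : dist (pt a b) (pt c d) = √((a - c) ^ 2 + (b - d) ^ 2) := by
  simp [EuclideanSpace.dist_eq, pt, Fin.sum_univ_two, Real.dist_eq, sq_abs]

lemma norm_pt_sub_pt_same_snd (a c b : ℝ) : ‖pt a b - pt c b‖ = |a - c| := by
  rw [← dist_eq_norm, dist_pt, sub_self, zero_pow two_ne_zero, add_zero, Real.sqrt_sq_eq_abs]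

/-- **An instance with multiple optimal solutions.**  In `ℝ²`, with `S₁, S₂` the closed
discs of radius 2 centered at `(-6,6)` and `(6,6)`, and `C₁, C₂` the closed discs of
radius 1 centered at `(-2,6)` and `(2,6)`, the minimum of
`F = ‖x₁-y₁‖ + ‖x₁-y₂‖ + ‖x₂-y₁‖ + ‖x₂-y₂‖` over `xᵢ ∈ Sᵢ, yⱼ ∈ Cⱼ` is `16`, and it
is attained at (at least) the two distinct feasible points
`((-4,6),(4,6),(-2,6),(2,6))` and `((-4,6),(4,6),(-1,6),(1,6))`. -/
theorem heron_22_example_multiple_solutions :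
    (∀ x₁ ∈ Metric.closedBall (pt (-6) 6) 2, ∀ x₂ ∈ Metric.closedBall (pt 6 6) 2,
      ∀ y₁ ∈ Metric.closedBall (pt (-2) 6) 1, ∀ y₂ ∈ Metric.closedBall (pt 2 6) 1,
        (16 : ℝ) ≤ ‖x₁ - y₁‖ + ‖x₁ - y₂‖ + ‖x₂ - y₁‖ + ‖x₂ - y₂‖) ∧
    (pt (-4) 6 ∈ Metric.closedBall (pt (-6) 6) 2 ∧
     pt 4 6 ∈ Metric.closedBall (pt 6 6) 2 ∧
     pt (-2) 6 ∈ Metric.closedBall (pt (-2) 6) 1 ∧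
     pt 2 6 ∈ Metric.closedBall (pt 2 6) 1 ∧
     ‖pt (-4) 6 - pt (-2) 6‖ + ‖pt (-4) 6 - pt 2 6‖ +
       ‖pt 4 6 - pt (-2) 6‖ + ‖pt 4 6 - pt 2 6‖ = 16) ∧
    (pt (-1) 6 ∈ Metric.closedBall (pt (-2) 6) 1 ∧
     pt 1 6 ∈ Metric.closedBall (pt 2 6) 1 ∧
     ‖pt (-4) 6 - pt (-1) 6‖ + ‖pt (-4) 6 - pt 1 6‖ +
       ‖pt 4 6 - pt (-1) 6‖ + ‖pt 4 6 - pt 1 6‖ = 16) ∧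
    ((pt (-4) 6, pt 4 6, pt (-2) 6, pt 2 6) ≠ (pt (-4) 6, pt 4 6, pt (-1) 6, pt 1 6)) := by
  refine ⟨?_, ⟨?_, ?_, ?_, ?_, ?_⟩, ⟨?_, ?_, ?_⟩, fun h => ?distinct⟩
  · intro x₁ hx₁ x₂ hx₂ y₁ _ y₂ _
    have hcenters : dist (pt (-6) 6) (pt 6 6) = 12 := by norm_num [dist_pt]
    simp only [← dist_eq_norm]
    linarith [dist_centers_sub_radii_le_dist hx₁ hx₂,
      two_mul_dist_le_dist_add_dist_add_dist_add_dist x₁ x₂ y₁ y₂]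
  case distinct =>
    have := congrArg (fun p => p.2.2.1 0) h
    norm_num [pt_apply_zero] at this
  any_goals norm_num [Metric.mem_closedBall, dist_pt]
  all_goals norm_num [norm_pt_sub_pt_same_snd]
end
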